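/- Let h_1,…,h_d be complex random variables, each uniform on {1, −1, i, −i} ⊂ ℂ, that are 4-wise independent (every subfamily of at most 4 of them is mutually independent). Then for any x, w ∈ ℝ^d: E[ (∑_{t=1}^d x_t h_t)² · (∑_{t=1}^d w_t h_t)² ] = ∑_{t=1}^d x_t² w_t², i.e., the expectation of this complex random variable equals the real number ‖x‖_w². -/

import Mathlib

open MeasureTheory ProbabilityTheory

/-- A complex random variable uniform on `{1, -1, i, -i}`. -/
def IsUniformFourth {Ω : Type*} [MeasurableSpace Ω] (μ : Measure Ω) (Z : Ω → ℂ) : Prop :=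
  μ (Z ⁻¹' {1}) = 1 / 4 ∧ μ (Z ⁻¹' {-1}) = 1 / 4 ∧
    μ (Z ⁻¹' {Complex.I}) = 1 / 4 ∧ μ (Z ⁻¹' {-Complex.I}) = 1 / 4

/-- A family of random variables is `m`-wise independent if every subfamily of at most `m`
of them is mutually independent. -/
def KWiseIndep {Ω ι : Type*} [MeasurableSpace Ω] {β : Type*} [MeasurableSpace β]
    (m : ℕ) (f : ι → Ω → β) (μ : Measure Ω) : Prop :=
  ∀ s : Finset ι, s.card ≤ m →
    iIndepFun (fun i : s => f i) μ

/-!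
Expanding the two squares writes the integrand as a sum, over index tuples `f : Fin 4 → Fin d`,
of coefficients times `∏ k, h (f k)`. Grouping equal indices, 4-wise independence factors the
expectation of such a product into moments `E[h_j ^ n]` with `n` the multiplicity of `j`, and for
`Z` uniform on the fourth roots of unity `E[Z ^ n] = 1` if `4 ∣ n` and `0` otherwise. Since the
multiplicities of a 4-tuple sum to 4, only the constant tuples `f = (t, t, t, t)` survive, each
contributing `x_t ^ 2 * w_t ^ 2`.
-/

open Complex Finset

lemma Fintype.sum_ite_forall_apply_eq_apply {ι κ M : Type*} [Fintype ι] [DecidableEq ι] [Fintype κ]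
    [AddCommMonoid M] {i₀ : ι} [DecidablePred fun f : ι → κ ↦ ∀ i, f i = f i₀]
    (G : (ι → κ) → M) :
    ∑ f : ι → κ, (if ∀ i, f i = f i₀ then G f else 0) = ∑ k, G (fun _ ↦ k) := by
  rw [← sum_filter]
  refine sum_nbij' (fun f ↦ f i₀) (fun k _ ↦ k) (by simp) (by simp) ?_ (by simp) ?_
  · intro f hf
    exact funext fun i ↦ ((mem_filter.1 hf).2 i).symm
  · intro f hf
    exact congrArg G (funext fun i ↦ (mem_filter.1 hf).2 i)

lemma sum_fourthRoots {M : Type*} [AddCommMonoid M] (g : ℂ → M) :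
    ∑ z ∈ ({1, -1, I, -I} : Finset ℂ), g z = g 1 + g (-1) + g I + g (-I) := by
  rw [sum_insert (by norm_num [Complex.ext_iff]), sum_insert (by norm_num [Complex.ext_iff]),
    sum_pair (by norm_num [Complex.ext_iff])]
  abel

section FiniteRange

variable {Ω β : Type*} [MeasurableSpace Ω] {μ : Measure Ω} [MeasurableSpace β]
  [MeasurableSingletonClass β] {Z : Ω → β} {s : Finset β}

lemma ae_mem_of_sum_measure_preimage_singleton [IsProbabilityMeasure μ] (hZ : Measurable Z)
    (hs : ∑ v ∈ s, μ (Z ⁻¹' {v}) = 1) : ∀ᵐ ω ∂μ, Z ω ∈ s := by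
  refine (ae_iff_measure_eq (hZ s.measurableSet).nullMeasurableSet).2 ?_
  rw [measure_univ, ← hs,
    sum_measure_preimage_singleton s fun v _ ↦ hZ (measurableSet_singleton v)]
  rfl

lemma integral_comp_eq_sum_of_ae_mem {E : Type*} [NormedAddCommGroup E] [NormedSpace ℝ E]
    [CompleteSpace E] [IsFiniteMeasure μ] (hZ : Measurable Z) (hs : ∀ᵐ ω ∂μ, Z ω ∈ s) (g : β → E) :
    ∫ ω, g (Z ω) ∂μ = ∑ v ∈ s, μ.real (Z ⁻¹' {v}) • g v := by
  have hfiber (v : β) : MeasurableSet (Z ⁻¹' {v}) := hZ (measurableSet_singleton v)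
  calc ∫ ω, g (Z ω) ∂μ = ∫ ω, ∑ v ∈ s, (Z ⁻¹' {v}).indicator (fun _ ↦ g v) ω ∂μ := by
        refine integral_congr_ae ?_
        filter_upwards [hs] with ω hω
        rw [sum_eq_single_of_mem (f := fun v ↦ (Z ⁻¹' {v}).indicator (fun _ ↦ g v) ω) (Z ω) hω
          fun v _ hv ↦ Set.indicator_of_notMem hv.symm _]
        exact (Set.indicator_of_mem (Set.mem_singleton (Z ω)) _).symm
    _ = ∑ v ∈ s, μ.real (Z ⁻¹' {v}) • g v := by
        rw [integral_finsetSum _ fun v _ ↦ (integrable_const _).indicator (hfiber v)]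
        exact sum_congr rfl fun v _ ↦ integral_indicator_const _ (hfiber v)

end FiniteRange

namespace IsUniformFourth

variable {Ω : Type*} [MeasurableSpace Ω] {μ : Measure Ω} [IsProbabilityMeasure μ] {Z : Ω → ℂ}

lemma ae_mem (hZ : Measurable Z) (hu : IsUniformFourth μ Z) :
    ∀ᵐ ω ∂μ, Z ω ∈ ({1, -1, I, -I} : Finset ℂ) := by
  obtain ⟨h1, h2, h3, h4⟩ := hu
  refine ae_mem_of_sum_measure_preimage_singleton hZ ?_
  rw [sum_fourthRoots, h1, h2, h3, h4, ENNReal.div_add_div_same, ENNReal.div_add_div_same,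
    ENNReal.div_add_div_same]
  norm_num
  exact ENNReal.div_self (by norm_num) (by norm_num)

lemma norm_eq_one (hZ : Measurable Z) (hu : IsUniformFourth μ Z) : ∀ᵐ ω ∂μ, ‖Z ω‖ = 1 := by
  filter_upwards [hu.ae_mem hZ] with ω hω
  simp only [mem_insert, mem_singleton] at hω
  rcases hω with h | h | h | h <;> simp [h]

lemma integral_comp {E : Type*} [NormedAddCommGroup E] [NormedSpace ℝ E] [CompleteSpace E]
    (hZ : Measurable Z) (hu : IsUniformFourth μ Z) (g : ℂ → E) :
    ∫ ω, g (Z ω) ∂μ = (4 : ℝ)⁻¹ • (g 1 + g (-1) + g I + g (-I)) := by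
  obtain ⟨h1, h2, h3, h4⟩ := hu
  rw [integral_comp_eq_sum_of_ae_mem hZ (ae_mem hZ ⟨h1, h2, h3, h4⟩), sum_fourthRoots]
  simp only [measureReal_def, h1, h2, h3, h4, one_div, ENNReal.toReal_inv, smul_add]
  norm_num

lemma integral_pow (hZ : Measurable Z) (hu : IsUniformFourth μ Z) (n : ℕ) :
    ∫ ω, Z ω ^ n ∂μ = if 4 ∣ n then 1 else 0 := by
  have hneg : (-1 : ℂ) ^ 4 = 1 := by norm_num
  have hnegI : (-I) ^ 4 = 1 := by rw [neg_pow, I_pow_four]; norm_num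
  rw [hu.integral_comp hZ (· ^ n), ← Nat.div_add_mod n 4]
  simp only [pow_add, pow_mul, hneg, hnegI, I_pow_four, one_pow, one_mul,
    Nat.dvd_add_right (dvd_mul_right 4 _)]
  have hr := Nat.mod_lt n (show 0 < 4 by norm_num)
  interval_cases n % 4 <;> norm_num [Complex.ext_iff, pow_succ]

end IsUniformFourth

lemma KWiseIndep.integral_prod_comp {Ω ι κ 𝕜 : Type*} [MeasurableSpace Ω] {μ : Measure Ω}
    [RCLike 𝕜] [Fintype κ] [DecidableEq ι] {m : ℕ} {h : ι → Ω → 𝕜}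
    (hind : KWiseIndep m h μ) (hmeas : ∀ i, Measurable (h i)) (f : κ → ι)
    (hκ : Fintype.card κ ≤ m) :
    ∫ ω, ∏ k, h (f k) ω ∂μ = ∏ j ∈ univ.image f, ∫ ω, h j ω ^ #{k | f k = j} ∂μ := by
  set s := univ.image f
  have hpow : iIndepFun (fun j : s ↦ fun ω ↦ h j ω ^ #{k | f k = j}) μ :=
    (hind s (card_image_le.trans hκ)).comp (fun j z ↦ z ^ #{k | f k = j})
      fun _ ↦ measurable_id.pow_const _
  have hfiber (ω : Ω) : ∏ k, h (f k) ω = ∏ j : s, h j ω ^ #{k | f k = j} := by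
    rw [prod_comp (fun i ↦ h i ω) f, ← prod_coe_sort s]
  simp_rw [hfiber, ← prod_coe_sort s]
  exact hpow.integral_fun_prod_eq_prod_integral fun j ↦
    ((hmeas j).pow_const _).aestronglyMeasurable

lemma IsUniformFourth.integral_prod_fin_four {Ω ι : Type*} [MeasurableSpace Ω] {μ : Measure Ω}
    [IsProbabilityMeasure μ] [DecidableEq ι] {h : ι → Ω → ℂ} (hmeas : ∀ i, Measurable (h i))
    (hunif : ∀ i, IsUniformFourth μ (h i)) (hind : KWiseIndep 4 h μ) (f : Fin 4 → ι) :
    ∫ ω, ∏ k, h (f k) ω ∂μ = if ∀ k, f k = f 0 then 1 else 0 := by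
  rw [hind.integral_prod_comp hmeas f (by simp)]
  simp only [fun j ↦ (hunif j).integral_pow (hmeas j)]
  split_ifs with hconst
  · refine prod_eq_one fun j hj ↦ ?_
    obtain ⟨k, -, rfl⟩ := mem_image.1 hj
    simp [hconst]
  · refine prod_eq_zero (mem_image_of_mem f (mem_univ 0)) (if_neg ?_)
    have hpos : 0 < #{k | f k = f 0} := card_pos.2 ⟨0, by simp⟩
    have hlt : #{k | f k = f 0} < 4 := by
      push Not at hconst
      obtain ⟨k, hk⟩ := hconst
      have : #{k | f k = f 0} < #(univ : Finset (Fin 4)) :=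
        card_lt_card (filter_ssubset.2 ⟨k, mem_univ k, hk⟩)
      rwa [card_univ, Fintype.card_fin] at this
    exact fun hdvd ↦ absurd (Nat.le_of_dvd hpos hdvd) (by omega)

lemma IsUniformFourth.integrable_prod {Ω ι κ : Type*} [MeasurableSpace Ω] {μ : Measure Ω}
    [IsProbabilityMeasure μ] [Fintype κ] {h : ι → Ω → ℂ} (hmeas : ∀ i, Measurable (h i))
    (hunif : ∀ i, IsUniformFourth μ (h i)) (f : κ → ι) :
    Integrable (fun ω ↦ ∏ k, h (f k) ω) μ := by
  refine .of_bound (measurable_prod _ fun k _ ↦ hmeas (f k)).aestronglyMeasurable 1 ?_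
  filter_upwards [ae_all_iff.2 fun k ↦ (hunif (f k)).norm_eq_one (hmeas (f k))] with ω hω
  simp [norm_prod, hω]

/-- for 4-wise independent hash values `h t`, each uniform on
`{1, -1, i, -i}`, the estimator is unbiased:
`E[(∑ t x_t h_t)² (∑ t w_t h_t)²] = ∑ t x_t² w_t² = ‖x‖_w²`. -/
theorem stmt_14 (Ω : Type*) [MeasurableSpace Ω] (μ : Measure Ω) [IsProbabilityMeasure μ]
    (d : ℕ) (h : Fin d → Ω → ℂ)
    (hmeas : ∀ t, Measurable (h t))
    (hunif : ∀ t, IsUniformFourth μ (h t))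
    (hindep : KWiseIndep 4 h μ)
    (x w : Fin d → ℝ) :
    (∫ ω, (∑ t, (x t : ℂ) * h t ω) ^ 2 * (∑ t, (w t : ℂ) * h t ω) ^ 2 ∂μ) =
      ((∑ t, (x t) ^ 2 * (w t) ^ 2 : ℝ) : ℂ) := by
  set c : Fin 4 → Fin d → ℂ := ![(x ·), (x ·), (w ·), (w ·)]
  have hexpand (ω : Ω) : (∑ t, (x t : ℂ) * h t ω) ^ 2 * (∑ t, (w t : ℂ) * h t ω) ^ 2 =
      ∑ f : Fin 4 → Fin d, (∏ k, c k (f k)) * ∏ k, h (f k) ω := by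
    calc (∑ t, (x t : ℂ) * h t ω) ^ 2 * (∑ t, (w t : ℂ) * h t ω) ^ 2
        = ∏ k, ∑ t, c k t * h t ω := by simp [Fin.prod_univ_four, c, sq, mul_assoc]
      _ = ∑ f : Fin 4 → Fin d, ∏ k, c k (f k) * h (f k) ω := Fintype.prod_sum _
      _ = ∑ f : Fin 4 → Fin d, (∏ k, c k (f k)) * ∏ k, h (f k) ω := by
        simp_rw [prod_mul_distrib]
  simp_rw [hexpand]
  rw [integral_finsetSum _ fun f _ ↦ (IsUniformFourth.integrable_prod hmeas hunif f).const_mul _]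
  simp_rw [integral_const_mul, IsUniformFourth.integral_prod_fin_four hmeas hunif hindep, mul_ite,
    mul_one, mul_zero]
  rw [Fintype.sum_ite_forall_apply_eq_apply]
  push_cast
  refine sum_congr rfl fun t _ ↦ ?_
  simp [c, Fin.prod_univ_four, sq, mul_assoc]
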